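/- arXiv:1202.1175 — 2 statements merged into one kernel-verified Lean document; each statement's English description precedes it below -/
import Mathlib

section
/- Let Y be a compact Hausdorff space, Y₁ ⊆ Y closed, n ≥ 1, Xₙ = Fin n discrete, Z = Xₙ × Y, A a unital C*-algebra, (a_{ij}) a magic unitary in A, and α : C(Z, ℂ) → C(Z, A) the map α(F)(x_k, y) = Σ_{i=1}^n F(x_i, y) a_{ki}. Then the linear span of the set {z ↦ α(F)(z) · a : F ∈ S, a ∈ A} is dense, with respect to the supremum norm, in S_A = {g ∈ C(Z, A) : g(x_k, y) = g(x_l, y) for all k, l ∈ Fin n and all y ∈ Y₁}. -/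
/-! Since the projections in each column of a magic unitary sum to `1`, they are mutually
orthogonal, so `∑ j, a k j * a l j = δ k l`. Combining the elements `α(F) · a l j b` with
this identity produces `H • b` for every `H` vanishing on `Fin n × Y₁`; the row sums produce
`f(y) • b` for every `f ∈ C(Y)`, and together these give `F • b` for every `F ∈ S`.
Finally, every `g ∈ S_A` is uniformly close to `∑ p, (φ p ∘ g) • b p`, where `φ` is a finite
partition of unity by small sets on the compact set `g(Z) ⊆ A`; each `φ p ∘ g` lies in `S`
because `g` does. -/

/-- The map `α : C(Fin n × Y, ℂ) → C(Fin n × Y, A)` determined by a family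
`a : Fin n → Fin n → A` via `α(F)(x_k, y) = ∑ i, F(x_i, y) a_{k i}`. -/
noncomputable def alphaMap {Y : Type*} [TopologicalSpace Y] {A : Type*} [NormedRing A]
    [NormedAlgebra ℂ A] (n : ℕ) (a : Fin n → Fin n → A) (F : C(Fin n × Y, ℂ)) :
    C(Fin n × Y, A) where
  toFun z := ∑ i, F (i, z.2) • a z.1 i
  continuous_toFun := by
    apply continuous_finset_sum
    intro i _
    exact (F.continuous.comp (continuous_const.prodMk continuous_snd)).smul
      (Continuous.comp (continuous_of_discreteTopology (f := fun k : Fin n => a k i))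
        continuous_fst)

open Metric in
theorem IsCompact.exists_finset_sum_smul_mem_ball {E : Type*} [NormedAddCommGroup E]
    [NormedSpace ℝ E] {K : Set E} (hK : IsCompact K) {ε : ℝ} (hε : 0 < ε) :
    ∃ (t : Finset E) (φ : t → C(E, ℝ)), ∀ x ∈ K, ∑ i, φ i x • (i : E) ∈ ball x ε := by
  obtain ⟨t, -, hKt⟩ := hK.elim_nhds_subcover (fun x => ball x ε) fun x _ => ball_mem_nhds x hε
  have hcover : K ⊆ ⋃ i : t, ball (i : E) ε := by simpa [Set.iUnion_subtype] using hKt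
  obtain ⟨f, hf⟩ := PartitionOfUnity.exists_isSubordinate hK.isClosed _
    (fun _ => isOpen_ball) hcover
  refine ⟨t, fun i => f i, fun x hx => ?_⟩
  rw [← finsum_eq_sum_of_fintype]
  refine f.finsum_smul_mem_convex (g := fun i _ => (i : E)) hx (fun i hi => ?_) (convex_ball x ε)
  exact mem_ball_comm.1 (hf i (subset_tsupport _ hi))

theorem ContinuousMap.mem_closure_span_comp_smul_const {X 𝕜 E : Type*} [TopologicalSpace X]
    [CompactSpace X] [RCLike 𝕜] [NormedAddCommGroup E] [NormedSpace ℝ E] [NormedSpace 𝕜 E]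
    [IsScalarTower ℝ 𝕜 E] (g : C(X, E)) :
    g ∈ closure (Submodule.span 𝕜
      {h : C(X, E) | ∃ (φ : C(E, 𝕜)) (b : E), h = φ.comp g • const X b} : Set C(X, E)) := by
  refine Metric.mem_closure_iff.2 fun ε hε => ?_
  obtain ⟨t, φ, hφ⟩ := (isCompact_range g.continuous).exists_finset_sum_smul_mem_ball hε
  let φ𝕜 (i : t) : C(E, 𝕜) := ⟨fun e => (φ i e : 𝕜), by fun_prop⟩
  refine ⟨∑ i, (φ𝕜 i).comp g • const X (i : E),
    Submodule.sum_mem _ fun i _ => Submodule.subset_span ⟨φ𝕜 i, i, rfl⟩, ?_⟩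
  rw [dist_eq_norm, ContinuousMap.norm_lt_iff _ hε]
  intro x
  have hx := hφ (g x) ⟨x, rfl⟩
  rw [Metric.mem_ball, dist_eq_norm'] at hx
  simp only [coe_sub, coe_sum, Pi.sub_apply, Finset.sum_apply, smul_apply', comp_apply,
    const_apply]
  simpa only [φ𝕜, coe_mk, ← RCLike.real_smul_eq_coe_smul] using hx

theorem IsStarProjection.mul_eq_zero_of_sum_eq_one {ι R : Type*} [Fintype ι] [NormedRing R]
    [StarRing R] [CStarRing R] [PartialOrder R] [StarOrderedRing R] {p : ι → R}
    (hp : ∀ i, IsStarProjection (p i)) (hsum : ∑ i, p i = 1) {i j : ι} (hij : i ≠ j) :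
    p i * p j = 0 := by
  classical
  have hsandwich (m : ι) : star (p m * p j) * (p m * p j) = p j * p m * p j := by
    rw [star_mul, (hp j).isSelfAdjoint.star_eq, (hp m).isSelfAdjoint.star_eq, mul_assoc,
      ← mul_assoc (p m), (hp m).isIdempotentElem.eq, mul_assoc]
  -- `∑ m, p j * p m * p j = p j`, whose term `m = j` is already `p j`
  have hrest : ∑ m ∈ Finset.univ.erase j, star (p m * p j) * (p m * p j) = 0 := by
    have htotal : ∑ m, p j * p m * p j = p j := by
      rw [← Finset.sum_mul, ← Finset.mul_sum, hsum, mul_one, (hp j).isIdempotentElem.eq]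
    rw [← Finset.add_sum_erase _ _ (Finset.mem_univ j), (hp j).isIdempotentElem.eq,
      (hp j).isIdempotentElem.eq, add_eq_left] at htotal
    simpa only [hsandwich] using htotal
  have hstar_mul_self : star (p i * p j) * (p i * p j) = 0 :=
    (Finset.sum_eq_zero_iff_of_nonneg fun m _ => star_mul_self_nonneg _).1 hrest i
      (Finset.mem_erase.2 ⟨hij, Finset.mem_univ i⟩)
  exact CStarRing.star_mul_self_eq_zero_iff _ |>.1 hstar_mul_self

structure IsMagicUnitary {ι R : Type*} [Fintype ι] [Semiring R] [Star R] (a : ι → ι → R) :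
    Prop where
  isStarProjection : ∀ i j, IsStarProjection (a i j)
  sum_row : ∀ i, ∑ j, a i j = 1
  sum_col : ∀ j, ∑ i, a i j = 1

theorem IsMagicUnitary.sum_mul_eq_ite {ι A : Type*} [Fintype ι] [DecidableEq ι] [NormedRing A]
    [StarRing A] [CStarRing A] [NormedAlgebra ℂ A] [StarModule ℂ A] [CompleteSpace A]
    {a : ι → ι → A} (ha : IsMagicUnitary a) (k l : ι) :
    ∑ j, a k j * a l j = if k = l then 1 else 0 := by
  let _ : CStarAlgebra A := {}
  let _ := CStarAlgebra.spectralOrder A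
  have := CStarAlgebra.spectralOrderedRing A
  split_ifs with hkl
  · subst hkl
    simp only [(ha.isStarProjection _ _).isIdempotentElem.eq, ha.sum_row]
  · exact Finset.sum_eq_zero fun j _ =>
      IsStarProjection.mul_eq_zero_of_sum_eq_one (fun i => ha.isStarProjection i j)
        (ha.sum_col j) hkl

section alphaSpan

open ContinuousMap

variable {Y : Type*} [TopologicalSpace Y] {A : Type*} [NormedRing A] [NormedAlgebra ℂ A]
  (Y₁ : Set Y) {n : ℕ} (a : Fin n → Fin n → A)

noncomputable def alphaSpan : Submodule ℂ C(Fin n × Y, A) :=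
  Submodule.span ℂ {h | ∃ (F : C(Fin n × Y, ℂ)) (b : A),
    (∀ (i j : Fin n), ∀ y ∈ Y₁, F (i, y) = F (j, y)) ∧
    h = alphaMap n a F * const (Fin n × Y) b}

variable {a}

theorem comp_snd_smul_const_mem_alphaSpan (harow : ∀ i, ∑ j, a i j = 1) (f : C(Y, ℂ)) (b : A) :
    f.comp (snd (α := Fin n)) • const (Fin n × Y) b ∈ alphaSpan Y₁ a := by
  refine Submodule.subset_span ⟨f.comp (snd (α := Fin n)), b, fun _ _ _ _ => rfl, ?_⟩
  ext ⟨k, y⟩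
  simp [alphaMap, ← Finset.smul_sum, harow]

theorem smul_const_mem_alphaSpan_of_forall_eq_zero [StarRing A] [CStarRing A] [StarModule ℂ A]
    [CompleteSpace A] (ha : IsMagicUnitary a) {H : C(Fin n × Y, ℂ)}
    (hH : ∀ k, ∀ y ∈ Y₁, H (k, y) = 0) (b : A) :
    H • const (Fin n × Y) b ∈ alphaSpan Y₁ a := by
  -- `G l j` is `H (l, ·)` placed on the fibre `j`, so that
  -- `alphaMap n a (G l j) (k, y) = H (l, y) • a k j`
  let G (l j : Fin n) : C(Fin n × Y, ℂ) :=
    ⟨fun z => (Pi.single j 1 : Fin n → ℂ) z.1 * H (l, z.2),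
      ((continuous_of_discreteTopology (f := (Pi.single j 1 : Fin n → ℂ))).comp
        continuous_fst).mul (by fun_prop)⟩
  have hsum : H • const (Fin n × Y) b =
      ∑ l, ∑ j, alphaMap n a (G l j) * const (Fin n × Y) (a l j * b) := by
    ext ⟨k, y⟩
    simp only [alphaMap, G, Pi.single_apply]
    calc H (k, y) • b = ∑ l, H (l, y) • ((if k = l then 1 else 0) * b) := by simp
      _ = ∑ l, H (l, y) • ((∑ j, a k j * a l j) * b) := by simp_rw [ha.sum_mul_eq_ite]
      _ = _ := by simp [Finset.sum_mul, Finset.smul_sum, mul_assoc]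
  rw [hsum]
  refine Submodule.sum_mem _ fun l _ => Submodule.sum_mem _ fun j _ =>
    Submodule.subset_span ⟨G l j, a l j * b, fun i i' y hy => ?_, rfl⟩
  simp [G, Pi.single_apply, hH l y hy]

theorem smul_const_mem_alphaSpan [StarRing A] [CStarRing A] [StarModule ℂ A]
    [CompleteSpace A] (ha : IsMagicUnitary a) {F : C(Fin n × Y, ℂ)}
    (hF : ∀ (i j : Fin n), ∀ y ∈ Y₁, F (i, y) = F (j, y)) (b : A) :
    F • const (Fin n × Y) b ∈ alphaSpan Y₁ a := by
  let average : C(Y, ℂ) := ⟨fun y => (n : ℂ)⁻¹ * ∑ l, F (l, y), by fun_prop⟩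
  have hsplit : F • const (Fin n × Y) b =
      average.comp (snd (α := Fin n)) • const (Fin n × Y) b +
        (F - average.comp (snd (α := Fin n))) • const (Fin n × Y) b := by
    ext z
    simp [sub_smul]
  rw [hsplit]
  refine add_mem (comp_snd_smul_const_mem_alphaSpan Y₁ ha.sum_row _ b)
    (smul_const_mem_alphaSpan_of_forall_eq_zero Y₁ ha (fun k y hy => ?_) b)
  have hn : (n : ℂ) ≠ 0 := Nat.cast_ne_zero.2 k.pos.ne'
  simp [average, hF _ k y hy, hn]

end alphaSpan

theorem alphaMap_span_dense_in_SA_general {Y : Type*} [TopologicalSpace Y] [CompactSpace Y]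
    (Y₁ : Set Y)
    {A : Type*} [NormedRing A] [StarRing A] [CStarRing A] [NormedAlgebra ℂ A]
    [StarModule ℂ A] [CompleteSpace A] (n : ℕ) (a : Fin n → Fin n → A)
    (haproj : ∀ i j, star (a i j) = a i j ∧ a i j * a i j = a i j)
    (harow : ∀ i, ∑ j, a i j = 1) (hacol : ∀ j, ∑ i, a i j = 1) :
    {g : C(Fin n × Y, A) | ∀ (k l : Fin n), ∀ y ∈ Y₁, g (k, y) = g (l, y)} ⊆
      closure (Submodule.span ℂ {h : C(Fin n × Y, A) |
        ∃ (F : C(Fin n × Y, ℂ)) (b : A),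
          (∀ (i j : Fin n), ∀ y ∈ Y₁, F (i, y) = F (j, y)) ∧
          h = alphaMap n a F * ContinuousMap.const (Fin n × Y) b} :
        Set C(Fin n × Y, A)) := by
  intro g hg
  have ha : IsMagicUnitary a :=
    ⟨fun i j => isStarProjection_iff'.2 (haproj i j).symm, harow, hacol⟩
  refine closure_mono (Submodule.span_le.2 ?_ : _ ≤ alphaSpan Y₁ a)
    (g.mem_closure_span_comp_smul_const (𝕜 := ℂ))
  rintro _ ⟨φ, b, rfl⟩
  exact smul_const_mem_alphaSpan Y₁ ha (fun i j y hy => by simp [hg i j y hy]) b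

/-- The linear span of `{z ↦ α(F)(z) · a : F ∈ S, a ∈ A}` is dense in
`S_A = {g ∈ C(Z, A) : g(x_k, y) = g(x_l, y) for all k, l and all y ∈ Y₁}` (with
respect to the supremum norm). -/
theorem alphaMap_span_dense_in_SA {Y : Type*} [TopologicalSpace Y] [CompactSpace Y]
    [T2Space Y] (Y₁ : Set Y) (hY₁ : IsClosed Y₁)
    {A : Type*} [NormedRing A] [StarRing A] [CStarRing A] [NormedAlgebra ℂ A]
    [StarModule ℂ A] [CompleteSpace A] (n : ℕ) (hn : 0 < n) (a : Fin n → Fin n → A)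
    (haproj : ∀ i j, star (a i j) = a i j ∧ a i j * a i j = a i j)
    (harow : ∀ i, ∑ j, a i j = 1) (hacol : ∀ j, ∑ i, a i j = 1) :
    {g : C(Fin n × Y, A) | ∀ (k l : Fin n), ∀ y ∈ Y₁, g (k, y) = g (l, y)} ⊆
      closure (Submodule.span ℂ {h : C(Fin n × Y, A) |
        ∃ (F : C(Fin n × Y, ℂ)) (b : A),
          (∀ (i j : Fin n), ∀ y ∈ Y₁, F (i, y) = F (j, y)) ∧
          h = alphaMap n a F * ContinuousMap.const (Fin n × Y) b} :
        Set C(Fin n × Y, A)) :=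
  alphaMap_span_dense_in_SA_general Y₁ n a haproj harow hacol
end

section
/- Let Y be a compact Hausdorff space, Y₁ ⊆ Y a closed subset with Y₁ ≠ Y, n ≥ 1, Xₙ = Fin n discrete, Z = Xₙ × Y, A a unital C*-algebra, (a_{ij}) a magic unitary in A, and α : C(Z, ℂ) → C(Z, A) the map α(F)(x_k, y) = Σ_{i=1}^n F(x_i, y) a_{ki}. Then for every pair of indices k, i ∈ Fin n there exist F ∈ S and a point z ∈ Z such that α(F)(z) = a_{ki}. (Consequently every generator a_{ki} lies in the image values of α restricted to S, which is the substance of the faithfulness of the induced action on Z/∼.) -/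
section ColumnBump

variable {ι Y : Type*} [TopologicalSpace ι] [DiscreteTopology ι] [DecidableEq ι]
  [TopologicalSpace Y]

noncomputable def columnBump (i : ι) (g : C(Y, ℂ)) : C(ι × Y, ℂ) where
  toFun z := if z.1 = i then g z.2 else 0
  continuous_toFun := continuous_prod_of_discrete_left.2 fun j => by
    by_cases hj : j = i
    · simpa [hj] using g.continuous
    · simpa [hj] using continuous_const

@[simp]
theorem columnBump_apply (i : ι) (g : C(Y, ℂ)) (z : ι × Y) :
    columnBump i g z = if z.1 = i then g z.2 else 0 :=
  rfl

theorem columnBump_apply_of_eq_zero {i : ι} {g : C(Y, ℂ)} {y : Y} (hy : g y = 0) (j : ι) :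
    columnBump i g (j, y) = 0 := by
  simp [hy]

end ColumnBump

theorem alphaMap_apply {Y : Type*} [TopologicalSpace Y] {A : Type*} [NormedRing A]
    [NormedAlgebra ℂ A] (n : ℕ) (a : Fin n → Fin n → A) (F : C(Fin n × Y, ℂ))
    (z : Fin n × Y) : alphaMap n a F z = ∑ i, F (i, z.2) • a z.1 i :=
  rfl

theorem alphaMap_columnBump {Y : Type*} [TopologicalSpace Y] {A : Type*} [NormedRing A]
    [NormedAlgebra ℂ A] (n : ℕ) (a : Fin n → Fin n → A) (i : Fin n) (g : C(Y, ℂ))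
    (z : Fin n × Y) : alphaMap n a (columnBump i g) z = g z.2 • a z.1 i := by
  simp [alphaMap_apply, ite_smul]

theorem alphaMap_faithful_general {Y : Type*} [TopologicalSpace Y] [CompactSpace Y] [T2Space Y]
    (Y₁ : Set Y) (hY₁ : IsClosed Y₁) (hY₁ne : Y₁ ≠ Set.univ)
    {A : Type*} [NormedRing A] [NormedAlgebra ℂ A] (n : ℕ) (a : Fin n → Fin n → A) :
    ∀ k i : Fin n, ∃ F : C(Fin n × Y, ℂ),
      (∀ (i' j' : Fin n), ∀ y ∈ Y₁, F (i', y) = F (j', y)) ∧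
      ∃ z : Fin n × Y, alphaMap n a F z = a k i := by
  intro k i
  obtain ⟨y₀, hy₀⟩ := (Set.ne_univ_iff_exists_notMem Y₁).1 hY₁ne
  obtain ⟨g, hg₀, hg₁, -⟩ := exists_continuous_zero_one_of_isClosed hY₁ isClosed_singleton
    (Set.disjoint_singleton_right.2 hy₀)
  set gℂ : C(Y, ℂ) := (Complex.ofRealCLM : C(ℝ, ℂ)).comp g
  refine ⟨columnBump i gℂ, fun i' j' y hy => ?_, (k, y₀), ?_⟩
  · have hgy : gℂ y = 0 := by simp [gℂ, hg₀ hy]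
    rw [columnBump_apply_of_eq_zero hgy, columnBump_apply_of_eq_zero hgy]
  · simp [alphaMap_columnBump, gℂ, hg₁ rfl]

/-- If `Y₁ ≠ Y`, then for every pair of indices `k, i` there exist
`F ∈ S` and a point `z ∈ Z` with `α(F)(z) = a_{k i}` (faithfulness of the induced
action on `Z/∼`). -/
theorem alphaMap_faithful {Y : Type*} [TopologicalSpace Y] [CompactSpace Y] [T2Space Y]
    (Y₁ : Set Y) (hY₁ : IsClosed Y₁) (hY₁ne : Y₁ ≠ Set.univ)
    {A : Type*} [NormedRing A] [StarRing A] [CStarRing A] [NormedAlgebra ℂ A]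
    [StarModule ℂ A] [CompleteSpace A] (n : ℕ) (hn : 0 < n) (a : Fin n → Fin n → A)
    (haproj : ∀ i j, star (a i j) = a i j ∧ a i j * a i j = a i j)
    (harow : ∀ i, ∑ j, a i j = 1) (hacol : ∀ j, ∑ i, a i j = 1) :
    ∀ k i : Fin n, ∃ F : C(Fin n × Y, ℂ),
      (∀ (i' j' : Fin n), ∀ y ∈ Y₁, F (i', y) = F (j', y)) ∧
      ∃ z : Fin n × Y, alphaMap n a F z = a k i :=
  alphaMap_faithful_general Y₁ hY₁ hY₁ne n a
end
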